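/- arXiv:1512.07577 — 2 statements merged into one kernel-verified Lean document; each statement's English description precedes it below -/
import Mathlib

section
/- Let X be a complete decomposition space, i.e. a Set-valued decomposition space in which the degeneracy map s_0 : X_0 → X_1 is injective. Then every degeneracy map s_i : X_n → X_{n+1} (0 ≤ i ≤ n) is injective. -/
open CategoryTheory CategoryTheory.Limits Simplicial Opposite

/-- A map in the simplex category is *generic* if it preserves the endpoints. -/
def IsGeneric {a b : SimplexCategory} (g : a ⟶ b) : Prop :=
  g.toOrderHom 0 = 0 ∧ g.toOrderHom (Fin.last a.len) = Fin.last b.len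

/-- A map in the simplex category is *free* if it is distance preserving. -/
def IsFree {a b : SimplexCategory} (f : a ⟶ b) : Prop :=
  ∀ i : Fin (a.len + 1), (f.toOrderHom i : ℕ) = (f.toOrderHom 0 : ℕ) + (i : ℕ)

/-- A decomposition space is a simplicial set carrying every pushout in `Δ` of a
generic map `g` along a free map `f` to a pullback of sets. -/
def IsDecomposition (X : SSet) : Prop :=
  ∀ ⦃a b c d : SimplexCategory⦄ (g : a ⟶ b) (f : a ⟶ c) (h : b ⟶ d) (k : c ⟶ d),
    IsGeneric g → IsFree f → IsPushout g f h k →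
    IsPullback (X.map h.op) (X.map k.op) (X.map g.op) (X.map f.op)

/-- A simplicial set is *complete* if all degeneracy maps are injective. -/
def Complete (X : SSet) : Prop :=
  ∀ (n : ℕ) (i : Fin (n + 1)), Function.Injective (X.σ i : X _⦋n⦌ ⟶ X _⦋n + 1⦌)

/-- The free map `[1] → [n]` sending `0, 1` to `i, i+1`; it induces the map
taking the `i`-th principal edge (`0`-indexed) of an `n`-simplex. -/
def principalEdge (n : ℕ) (i : Fin n) : (⦋1⦌ : SimplexCategory) ⟶ ⦋n⦌ :=
  SimplexCategory.mkHom
    { toFun := fun j => ⟨i.1 + j.1, by have := i.2; have := j.2; omega⟩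
      monotone' := fun a b h => by
        simp only [Fin.mk_le_mk]
        exact Nat.add_le_add_left h i.1 }

/-- The unique generic map `[1] → [n]` (`0 ↦ 0`, `1 ↦ n`); it induces the map
taking the long edge of an `n`-simplex. -/
def longEdgeMap (n : ℕ) : (⦋1⦌ : SimplexCategory) ⟶ ⦋n⦌ :=
  SimplexCategory.mkHom
    { toFun := fun j => ⟨j.1 * n, by
        have h := j.2
        have : j.1 * n ≤ 1 * n := Nat.mul_le_mul_right n (by omega)
        omega⟩
      monotone' := fun a b h => by
        simp only [Fin.mk_le_mk]
        exact Nat.mul_le_mul_right n h }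

/-- The alphabet `{0, 1, a}`: `z` prescribes a degenerate principal edge, `o` an
unrestricted one, `a` a nondegenerate one. -/
inductive Letter where
  | z
  | o
  | a
  deriving DecidableEq

/-- The subset of `X₁` prescribed by a letter. -/
def edgeSet (X : SSet) : Letter → Set (X _⦋1⦌) := fun l =>
  Letter.casesOn (motive := fun _ => Set (X _⦋1⦌)) l
    (Set.range (X.σ (0 : Fin 1)))
    Set.univ
    (Set.range (X.σ (0 : Fin 1)))ᶜ

/-- `X_w`, the set of `n`-simplices whose principal edges have the types
prescribed by the word `w`. -/
def wordSet (X : SSet) {n : ℕ} (w : Fin n → Letter) : Set (X _⦋n⦌) :=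
  {σ | ∀ i : Fin n, X.map (principalEdge n i).op σ ∈ edgeSet X (w i)}

/-- A simplex is *effective* if all its principal edges are nondegenerate. -/
def Effective (X : SSet) {n : ℕ} (σ : X _⦋n⦌) : Prop :=
  ∀ i : Fin n, X.map (principalEdge n i).op σ ∉ Set.range (X.σ (0 : Fin 1))

/-- The constant word `aa⋯a`. -/
def allA (n : ℕ) : Fin n → Letter := fun _ => Letter.a

/-- Concatenation of words. -/
def concatW {m n : ℕ} (v : Fin m → Letter) (v' : Fin n → Letter) : Fin (m + n) → Letter :=
  fun i => if h : i.1 < m then v ⟨i.1, h⟩ else v' ⟨i.1 - m, by have := i.2; omega⟩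

/-- The word `v ℓ v'` obtained by splicing a letter `ℓ` between the words `v` and `v'`. -/
def splice {m n : ℕ} (v : Fin m → Letter) (l : Letter) (v' : Fin n → Letter) :
    Fin (m + n + 1) → Letter :=
  fun i => if h : i.1 < m then v ⟨i.1, h⟩
    else if h2 : i.1 = m then l
    else v' ⟨i.1 - (m + 1), by have := i.2; omega⟩

/-- A simplex (of positive dimension) is degenerate if it is in the image of some
degeneracy map. -/
def Degen (X : SSet) {n : ℕ} (σ : X _⦋n + 1⦌) : Prop :=
  ∃ i : Fin (n + 1), σ ∈ Set.range (X.σ i)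

/-- A simplicial map is *cULF* if its naturality squares on all generic maps are
pullbacks. -/
def IsCULF {Y X : SSet} (f : Y ⟶ X) : Prop :=
  ∀ ⦃a b : SimplexCategory⦄ (g : a ⟶ b), IsGeneric g →
    IsPullback (f.app (op b)) (Y.map g.op) (X.map g.op) (f.app (op a))

/-- A simplicial map is *conservative* if its naturality squares on all degeneracy
maps are pullbacks. -/
def Conservative {Y X : SSet} (f : Y ⟶ X) : Prop :=
  ∀ (n : ℕ) (i : Fin (n + 1)),
    IsPullback (f.app (op (SimplexCategory.mk n))) (Y.σ i) (X.σ i)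
      (f.app (op (SimplexCategory.mk (n + 1))))

/-- A simplicial set is *stiff* if it carries every pushout in `Δ` of a codegeneracy
map along a free map to a pullback of sets. -/
def Stiff (X : SSet) : Prop :=
  ∀ (k : ℕ) (i : Fin (k + 1)) ⦃c d : SimplexCategory⦄
    (f : SimplexCategory.mk (k + 1) ⟶ c) (h : SimplexCategory.mk k ⟶ d) (j : c ⟶ d),
    IsFree f → IsPushout (SimplexCategory.σ i) f h j →
    IsPullback (X.map h.op) (X.map j.op) (X.map (SimplexCategory.σ i).op) (X.map f.op)

/-- The map `[0] → [n]` picking out the vertex `i`. -/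
def vertexMap (n : ℕ) (i : Fin (n + 1)) : (⦋0⦌ : SimplexCategory) ⟶ ⦋n⦌ :=
  SimplexCategory.mkHom ⟨fun _ => i, fun _ _ _ => le_refl _⟩

/-- The unique map `[n] → [0]`; it induces the iterated degeneracy `X₀ → Xₙ`. -/
def toZero (n : ℕ) : (⦋n⦌ : SimplexCategory) ⟶ ⦋0⦌ :=
  SimplexCategory.mkHom ⟨fun _ => 0, fun _ _ _ => le_refl _⟩

/-- The generic map `[2] → [m+n]` sending `0,1,2` to `0,m,m+n`. -/
def midMap (m n : ℕ) : (⦋2⦌ : SimplexCategory) ⟶ ⦋m + n⦌ :=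
  SimplexCategory.mkHom
    { toFun := fun j => ⟨if j.1 = 0 then 0 else if j.1 = 1 then m else m + n, by
        split
        · omega
        · split <;> omega⟩
      monotone' := by
        intro a b hab
        have h : a.1 ≤ b.1 := hab
        have ha := a.2
        have hb := b.2
        simp only [Fin.mk_le_mk]
        split <;> split <;> (try split) <;> (try split) <;> omega }

/-- The free map `[m] → [m+n]` onto the initial segment. -/
def freeInitial (m n : ℕ) : (⦋m⦌ : SimplexCategory) ⟶ ⦋m + n⦌ :=
  SimplexCategory.mkHom ⟨fun i => ⟨i.1, by have := i.2; omega⟩, fun a b h => h⟩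

/-- The free map `[n] → [m+n]` onto the final segment. -/
def freeFinal (m n : ℕ) : (⦋n⦌ : SimplexCategory) ⟶ ⦋m + n⦌ :=
  SimplexCategory.mkHom ⟨fun i => ⟨m + i.1, by have := i.2; omega⟩,
    fun a b h => by
      simp only [Fin.mk_le_mk]
      exact Nat.add_le_add_left h m⟩

/-- The word `1aa⋯a` (`n` letters `a`). -/
def oneA (n : ℕ) : Fin (n + 1) → Letter := fun i => if i.1 = 0 then Letter.o else Letter.a

/-- The word `0aa⋯a` (`n` letters `a`). -/
def zeroA (n : ℕ) : Fin (n + 1) → Letter := fun i => if i.1 = 0 then Letter.z else Letter.a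

/-- The word `aa⋯a1` (`n` letters `a`). -/
def aOne (n : ℕ) : Fin (n + 1) → Letter := fun i => if i.1 = n then Letter.o else Letter.a

/-- The word `aa⋯a0` (`n` letters `a`). -/
def aZero (n : ℕ) : Fin (n + 1) → Letter := fun i => if i.1 = n then Letter.z else Letter.a

/-- The number of letters `0` in a word. -/
def zcount {n : ℕ} (w : Fin n → Letter) : ℕ :=
  (Finset.univ.filter fun i => w i = Letter.z).card

/-- The surjection `[n] → [n - zcount w]` collapsing, for each position `j` with
`w j = 0`, the vertex `j+1` onto the vertex `j`; the induced map
`X_{n - zcount w} → X_n` is the iterated degeneracy `s_{j_k} ⋯ s_{j_1}` where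
`j_1 < ⋯ < j_k` are the positions of the letters `0` of `w`. -/
def collapseMap {n : ℕ} (w : Fin n → Letter) :
    (⦋n⦌ : SimplexCategory) ⟶ ⦋n - zcount w⦌ :=
  SimplexCategory.mkHom
    { toFun := fun t =>
        ⟨(Finset.univ.filter fun i : Fin n => i.1 < t.1 ∧ ¬ (w i = Letter.z)).card, by
          have h2 := Finset.card_filter_add_card_filter_not
            (s := (Finset.univ : Finset (Fin n))) (p := fun i => w i = Letter.z)
          have h1 : (Finset.univ.filter fun i : Fin n => i.1 < t.1 ∧ ¬ (w i = Letter.z)).card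
              ≤ (Finset.univ.filter fun i : Fin n => ¬ (w i = Letter.z)).card :=
            Finset.card_le_card (fun x hx => by
              simp only [Finset.mem_filter] at hx ⊢
              exact ⟨hx.1, hx.2.2⟩)
          have h3 : zcount w = (Finset.univ.filter fun i : Fin n => w i = Letter.z).card := rfl
          simp only [Finset.card_univ, Fintype.card_fin] at h2
          omega⟩
      monotone' := by
        intro a b hab
        have h : a.1 ≤ b.1 := hab
        simp only [Fin.mk_le_mk]
        exact Finset.card_le_card (fun x hx => by
          simp only [Finset.mem_filter] at hx ⊢
          exact ⟨hx.1, lt_of_lt_of_le hx.2.1 h, hx.2.2⟩) }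

/-- An edge has finite length if there is a bound on the dimensions of the effective
simplices having it as long edge. -/
def FiniteLength (X : SSet) (a : X _⦋1⦌) : Prop :=
  ∃ N : ℕ, ∀ (n : ℕ) (σ : X _⦋n⦌), Effective X σ →
    X.map (longEdgeMap n).op σ = a → n ≤ N

/-- A *tight* decomposition space: a complete decomposition space in which every edge
has finite length. -/
def Tight (X : SSet) : Prop :=
  IsDecomposition X ∧ Function.Injective (X.σ (0 : Fin 1) : X _⦋0⦌ ⟶ X _⦋1⦌) ∧
    ∀ a : X _⦋1⦌, FiniteLength X a

/-- The length of an edge: the supremum of the dimensions of effective simplices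
having it as long edge. -/
noncomputable def edgeLength (X : SSet) (a : X _⦋1⦌) : ℕ :=
  sSup {n | ∃ σ : X _⦋n⦌, Effective X σ ∧ X.map (longEdgeMap n).op σ = a}

/-- A complete simplicial set is *split* if all face maps preserve nondegenerate
simplices. -/
def Split (X : SSet) : Prop :=
  Complete X ∧ ∀ (n : ℕ) (i : Fin (n + 3)) (σ : X _⦋n + 2⦌),
    ¬ Degen X σ → ¬ Degen X (X.δ i σ)

/-- The counit: the indicator function of the degenerate edges. -/
noncomputable def epsFun (X : SSet) : X _⦋1⦌ → ℚ := fun f =>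
  haveI := Classical.propDecidable (f ∈ Set.range (X.σ (0 : Fin 1)))
  if f ∈ Set.range (X.σ (0 : Fin 1)) then 1 else 0

/-- Convolution product on `ℚ`-valued functions on `X₁`. -/
noncomputable def convFun (X : SSet) (φ ψ : X _⦋1⦌ → ℚ) : X _⦋1⦌ → ℚ :=
  fun f => ∑ᶠ σ ∈ (fun τ => X.δ (1 : Fin 3) τ) ⁻¹' {f},
    φ (X.δ (2 : Fin 3) σ) * ψ (X.δ (0 : Fin 3) σ)

/-- The Möbius function `Φ_even - Φ_odd`. -/
noncomputable def muFun (X : SSet) : X _⦋1⦌ → ℚ :=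
  fun f => ∑ᶠ n : ℕ, (-1 : ℚ) ^ n *
    (Nat.card {σ : X.obj (op (SimplexCategory.mk n)) // Effective X σ ∧ X.map (longEdgeMap n).op σ = f} : ℚ)

/-- The category `Δ_inj`: objects those of the simplex category, morphisms the
injective monotone maps. -/
structure DeltaInj : Type where
  /-- the underlying object of the simplex category -/
  obj : SimplexCategory

instance : Category DeltaInj where
  Hom a b := {f : a.obj ⟶ b.obj // Function.Injective f.toOrderHom}
  id a := ⟨𝟙 a.obj, by
    rw [SimplexCategory.id_toOrderHom]
    exact fun x y h => h⟩
  comp f g := ⟨f.1 ≫ g.1, by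
    rw [SimplexCategory.comp_toOrderHom]
    exact fun x y h => f.2 (g.2 h)⟩
  id_comp f := by apply Subtype.ext; simp
  comp_id f := by apply Subtype.ext; simp
  assoc f g h := by apply Subtype.ext; simp

/-- The inclusion functor `Δ_inj ⊆ Δ`. -/
def DeltaInj.incl : DeltaInj ⥤ SimplexCategory where
  obj a := a.obj
  map f := f.1

/-- A *semi-decomposition space*: a semi-simplicial set carrying every pushout in
`Δ_inj` of a generic (inner) face map along a free (outer) face map to a pullback. -/
def IsSemiDecomposition (Z : DeltaInjᵒᵖ ⥤ Type) : Prop :=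
  ∀ ⦃a b c d : DeltaInj⦄ (g : a ⟶ b) (f : a ⟶ c) (h : b ⟶ d) (k : c ⟶ d),
    IsGeneric g.1 → IsFree f.1 → IsPushout g f h k →
    IsPullback (Z.map h.op) (Z.map k.op) (Z.map g.op) (Z.map f.op)

/-- A map of semi-simplicial sets is *ULF* if its naturality squares on all generic
face maps are pullbacks. -/
def IsULF {Z W : DeltaInjᵒᵖ ⥤ Type} (φ : Z ⟶ W) : Prop :=
  ∀ ⦃a b : DeltaInj⦄ (g : a ⟶ b), IsGeneric g.1 →
    IsPullback (φ.app (op b)) (Z.map g.op) (W.map g.op) (φ.app (op a))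

lemma conservative_id (X : SSet) : Conservative (𝟙 X) := by
  intro n i
  exact IsPullback.of_horiz_isIso ⟨by simp⟩

lemma conservative_comp {X Y Z : SSet} {f : X ⟶ Y} {g : Y ⟶ Z}
    (hf : Conservative f) (hg : Conservative g) : Conservative (f ≫ g) := by
  intro n i
  simpa using IsPullback.paste_horiz (hf n i) (hg n i)

lemma isCULF_id (X : SSet) : IsCULF (𝟙 X) := by
  intro a b gm hgm
  exact IsPullback.of_horiz_isIso ⟨by simp⟩

lemma isCULF_comp {X Y Z : SSet} {f : X ⟶ Y} {g : Y ⟶ Z}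
    (hf : IsCULF f) (hg : IsCULF g) : IsCULF (f ≫ g) := by
  intro a b gm hgm
  simpa using IsPullback.paste_horiz (hf gm hgm) (hg gm hgm)

lemma isULF_id (Z : DeltaInjᵒᵖ ⥤ Type) : IsULF (𝟙 Z) := by
  intro a b gm hgm
  exact IsPullback.of_horiz_isIso ⟨by simp⟩

lemma isULF_comp {X Y Z : DeltaInjᵒᵖ ⥤ Type} {f : X ⟶ Y} {g : Y ⟶ Z}
    (hf : IsULF f) (hg : IsULF g) : IsULF (f ≫ g) := by
  intro a b gm hgm
  simpa using IsPullback.paste_horiz (hf gm hgm) (hg gm hgm)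

/-- The category of split simplicial sets and conservative maps. -/
structure SplitSSet : Type 1 where
  /-- the underlying simplicial set -/
  X : SSet.{0}
  split : Split X

instance : Category SplitSSet where
  Hom A B := {f : A.X ⟶ B.X // Conservative f}
  id A := ⟨𝟙 A.X, conservative_id A.X⟩
  comp f g := ⟨f.1 ≫ g.1, conservative_comp f.2 g.2⟩
  id_comp f := by apply Subtype.ext; simp
  comp_id f := by apply Subtype.ext; simp
  assoc f g h := by apply Subtype.ext; simp

/-- The forgetful functor from split simplicial sets to simplicial sets. -/
def SplitSSet.forget : SplitSSet ⥤ SSet where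
  obj A := A.X
  map f := f.1

/-- The category of split decomposition spaces and cULF maps. -/
structure SplitDecomp : Type 1 where
  /-- the underlying simplicial set -/
  X : SSet.{0}
  split : Split X
  decomp : IsDecomposition X

instance : Category SplitDecomp where
  Hom A B := {f : A.X ⟶ B.X // IsCULF f}
  id A := ⟨𝟙 A.X, isCULF_id A.X⟩
  comp f g := ⟨f.1 ≫ g.1, isCULF_comp f.2 g.2⟩
  id_comp f := by apply Subtype.ext; simp
  comp_id f := by apply Subtype.ext; simp
  assoc f g h := by apply Subtype.ext; simp

/-- The forgetful functor from split decomposition spaces to simplicial sets. -/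
def SplitDecomp.forget : SplitDecomp ⥤ SSet where
  obj A := A.X
  map f := f.1

/-- The category of semi-decomposition spaces and ULF maps. -/
structure SemiDecomp : Type 1 where
  /-- the underlying semi-simplicial set -/
  Z : DeltaInjᵒᵖ ⥤ Type
  semidecomp : IsSemiDecomposition Z

instance : Category SemiDecomp where
  Hom A B := {φ : A.Z ⟶ B.Z // IsULF φ}
  id A := ⟨𝟙 A.Z, isULF_id A.Z⟩
  comp f g := ⟨f.1 ≫ g.1, isULF_comp f.2 g.2⟩
  id_comp f := by apply Subtype.ext; simp
  comp_id f := by apply Subtype.ext; simp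
  assoc f g h := by apply Subtype.ext; simp

/-- The forgetful functor from semi-decomposition spaces to semi-simplicial sets. -/
def SemiDecomp.forget : SemiDecomp ⥤ (DeltaInjᵒᵖ ⥤ Type) where
  obj A := A.Z
  map f := f.1
/-!
Collapsing the `i`-th principal edge of `⦋n + 1⦌` to a point is a pushout in `Δ` of the generic
codegeneracy `⦋1⦌ → ⦋0⦌` along the free map `⦋1⦌ → ⦋n + 1⦌` picking that edge, with the
codegeneracy `σ i` as the opposite side. The decomposition axiom turns it into a pullback
exhibiting `s_i : X_n → X_{n+1}` as a base change of `s_0 : X_0 → X_1`, and monomorphisms are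
stable under pullback.
-/

namespace SimplexCategory

lemma isGeneric_σ_zero : IsGeneric (σ (0 : Fin 1)) :=
  ⟨Subsingleton.elim (α := Fin 1) _ _, Subsingleton.elim (α := Fin 1) _ _⟩

lemma isFree_principalEdge (n : ℕ) (i : Fin n) : IsFree (principalEdge n i) :=
  fun _ => rfl

lemma σ_zero_comp_vertexMap {n : ℕ} (i : Fin (n + 1)) :
    σ (0 : Fin 1) ≫ vertexMap n i = principalEdge (n + 1) i ≫ σ i := by
  ext j : 3
  fin_cases j
  · exact (Fin.predAbove_castSucc_self i).symm
  · exact (Fin.predAbove_succ_self i).symm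

lemma toOrderHom_castSucc_eq_succ_of_comm {n : ℕ} {i : Fin (n + 1)} {T : SimplexCategory}
    {u : ⦋n + 1⦌ ⟶ T} {v : ⦋0⦌ ⟶ T} (h : σ (0 : Fin 1) ≫ v = principalEdge (n + 1) i ≫ u) :
    u.toOrderHom i.castSucc = u.toOrderHom i.succ :=
  calc u.toOrderHom i.castSucc = (σ (0 : Fin 1) ≫ v).toOrderHom 0 := by rw [h]; rfl
    _ = (σ (0 : Fin 1) ≫ v).toOrderHom 1 :=
      congr_arg v.toOrderHom (Subsingleton.elim (α := Fin 1) _ _)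
    _ = u.toOrderHom i.succ := by rw [h]; rfl

lemma isPushout_σ_principalEdge (n : ℕ) (i : Fin (n + 1)) :
    IsPushout (σ (0 : Fin 1)) (principalEdge (n + 1) i) (vertexMap n i) (σ i) := by
  refine IsPushout.of_isColimit' ⟨σ_zero_comp_vertexMap i⟩ <|
    PushoutCocone.IsColimit.mk _ (fun s => δ i.succ ≫ s.inr) (fun s => ?_) (fun s => ?_)
      (fun s m _ hm => by rw [← hm, δ_comp_σ_succ_assoc])
  -- a cocone leg out of `⦋n + 1⦌` identifies `i` and `i + 1`, so it factors through `σ i`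
  all_goals
    obtain ⟨θ, hθ⟩ :=
      eq_σ_comp_of_not_injective' s.inr i (toOrderHom_castSucc_eq_succ_of_comm s.condition)
  · rw [← cancel_epi (σ (0 : Fin 1)), s.condition, hθ, δ_comp_σ_succ_assoc,
      ← Category.assoc, ← Category.assoc, σ_zero_comp_vertexMap]
  · rw [hθ, δ_comp_σ_succ_assoc]

end SimplexCategory

theorem statement0 (X : SSet) (hX : IsDecomposition X)
    (hc : Function.Injective (X.σ (0 : Fin 1) : X _⦋0⦌ ⟶ X _⦋1⦌)) :
    ∀ (n : ℕ) (i : Fin (n + 1)), Function.Injective (X.σ i : X _⦋n⦌ ⟶ X _⦋n + 1⦌) := by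
  intro n i
  have hpb := hX _ _ _ _ SimplexCategory.isGeneric_σ_zero
    (SimplexCategory.isFree_principalEdge _ _) (SimplexCategory.isPushout_σ_principalEdge n i)
  have : Mono (X.σ (0 : Fin 1)) := (mono_iff_injective _).2 hc
  exact (mono_iff_injective _).1 (hpb.mono_snd_of_mono this)
end

section
/- Left Kan extension along the inclusion Δ_inj^op ↪ Δ^op induces an equivalence of categories between the category of semi-simplicial sets (with all natural transformations as morphisms) and the category whose objects are split simplicial sets and whose morphisms are conservative simplicial maps. -/
open CategoryTheory CategoryTheory.Limits Simplicial Opposite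

/-!
Every map of `Δ` factors uniquely as an epimorphism followed by a monomorphism, so the left
Kan extension `L Z` of a semi-simplicial set `Z` has as `n`-simplices the pairs `(e, z)` of a
surjection `e : [n] ↠ [k]` and a simplex `z ∈ Z_k`, acted on through epi-mono factorisations.
Such a pair is degenerate exactly when `e` is not the identity, so `L Z` is complete and its
nondegenerate simplices form a copy of `Z`, closed under faces: `L Z` is split.

Between complete simplicial sets a map is conservative exactly when it reflects degeneracies.
Hence `L` sends every map to a conservative one, and a conservative map `L Z ⟶ L W` preserves
nondegenerate simplices, so it restricts to a map `Z ⟶ W`: `L` is fully faithful. It is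
essentially surjective because, by the Eilenberg–Zilber lemma, a split simplicial set is the
left Kan extension of its semi-simplicial set of nondegenerate simplices.
-/

namespace DeltaInj

def homOfMono {b c : SimplexCategory} (i : b ⟶ c) [Mono i] : (⟨b⟩ : DeltaInj) ⟶ ⟨c⟩ :=
  ⟨i, SimplexCategory.mono_iff_injective.mp ‹_›⟩

@[simp]
lemma homOfMono_id (b : SimplexCategory) : homOfMono (𝟙 b) = 𝟙 (⟨b⟩ : DeltaInj) := rfl

@[simp]
lemma homOfMono_comp {b c d : SimplexCategory} (i : b ⟶ c) (j : c ⟶ d) [Mono i] [Mono j] :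
    homOfMono (i ≫ j) = homOfMono i ≫ homOfMono j := rfl

instance {a b : DeltaInj} (u : a ⟶ b) : Mono u.1 := SimplexCategory.mono_iff_injective.mpr u.2

end DeltaInj

section Conservative

variable {X Y : SSet} {f : Y ⟶ X}

lemma Conservative.mem_range_σ (hf : Conservative f) {n : ℕ} (i : Fin (n + 1))
    {y : Y _⦋n + 1⦌} (hy : f.app _ y ∈ Set.range (X.σ i)) : y ∈ Set.range (Y.σ i) := by
  obtain ⟨x, hx⟩ := hy
  obtain ⟨p, -, hp⟩ := Types.exists_of_isPullback (hf n i) x y hx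
  exact ⟨p, hp⟩

lemma Conservative.not_degen (hf : Conservative f) {n : ℕ} {y : Y _⦋n + 1⦌}
    (hy : ¬ Degen Y y) : ¬ Degen X (f.app _ y) :=
  fun ⟨i, hi⟩ => hy ⟨i, Conservative.mem_range_σ hf i hi⟩

lemma conservative_of_mem_range_σ (hY : Complete Y) (hX : Complete X)
    (h : ∀ (n : ℕ) (i : Fin (n + 1)) (y : Y _⦋n + 1⦌),
      f.app _ y ∈ Set.range (X.σ i) → y ∈ Set.range (Y.σ i)) :
    Conservative f := by
  intro n i
  rw [Types.isPullback_iff]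
  refine ⟨(f.naturality _).symm, fun p q ⟨_, hpq⟩ => hY n i hpq, fun x y hxy => ?_⟩
  obtain ⟨p, rfl⟩ := h n i y ⟨x, hxy⟩
  exact ⟨p, hX n i
    ((NatTrans.naturality_apply f (SimplexCategory.σ i).op p).symm.trans hxy.symm), rfl⟩

lemma conservative_of_isIso (f : Y ⟶ X) [IsIso f] : Conservative f :=
  fun _ _ => IsPullback.of_horiz_isIso ⟨(f.naturality _).symm⟩

noncomputable def SplitSSet.isoOfIsIso {A B : SplitSSet} (f : A.X ⟶ B.X) (hf : IsIso f) :
    A ≅ B where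
  hom := ⟨f, conservative_of_isIso f⟩
  inv := ⟨inv f, conservative_of_isIso (inv f)⟩
  hom_inv_id := Subtype.ext (IsIso.hom_inv_id f)
  inv_hom_id := Subtype.ext (IsIso.inv_hom_id f)

end Conservative

section NonDegenerate

variable {X : SSet}

lemma mem_nonDegenerate_iff_not_degen {n : ℕ} (x : X _⦋n + 1⦌) :
    x ∈ X.nonDegenerate (n + 1) ↔ ¬ Degen X x := by
  simp [SSet.mem_nonDegenerate_iff_notMem_degenerate, SSet.degenerate_eq_iUnion_range_σ, Degen]

lemma Split.map_mem_nonDegenerate (hX : Split X) {m n : ℕ} (i : ⦋n⦌ ⟶ ⦋m⦌) [Mono i]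
    {x : X _⦋m⦌} (hx : x ∈ X.nonDegenerate m) : X.map i.op x ∈ X.nonDegenerate n := by
  induction m generalizing n with
  | zero =>
    obtain rfl : n = 0 := Nat.le_zero.mp (SimplexCategory.le_of_mono i)
    simp
  | succ m ih =>
    by_cases hi : Function.Surjective i.toOrderHom
    · have : Epi i := SimplexCategory.epi_iff_surjective.mpr hi
      obtain rfl : n = m + 1 :=
        le_antisymm (SimplexCategory.le_of_mono i) (SimplexCategory.le_of_epi i)
      rwa [SimplexCategory.eq_id_of_mono i, op_id, Functor.map_id_apply]
    · obtain ⟨j, θ, rfl⟩ := SimplexCategory.eq_comp_δ_of_not_surjective i hi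
      have := mono_of_mono θ (SimplexCategory.δ j)
      rw [op_comp, Functor.map_comp_apply]
      refine ih θ ?_
      cases m with
      | zero => simp
      | succ k =>
        rw [mem_nonDegenerate_iff_not_degen] at hx ⊢
        exact hX.2 k j x hx

def Split.nonDegenerate (hX : Split X) : Subfunctor (DeltaInj.incl.op ⋙ X) where
  obj a := X.nonDegenerate a.unop.obj.len
  map u _ hx := Split.map_mem_nonDegenerate hX u.unop.1 hx

end NonDegenerate

namespace SemiSimplicial

open DeltaInj

variable {Z W : DeltaInjᵒᵖ ⥤ Type}

structure LanSimplex (Z : DeltaInjᵒᵖ ⥤ Type) (a : SimplexCategory) : Type where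
  b : SimplexCategory
  e : a ⟶ b
  [epi : Epi e]
  z : Z.obj (op ⟨b⟩)

attribute [instance] LanSimplex.epi

namespace LanSimplex

noncomputable def map {a a' : SimplexCategory} (f : a' ⟶ a) (s : LanSimplex Z a) :
    LanSimplex Z a' :=
  ⟨image (f ≫ s.e), factorThruImage (f ≫ s.e), Z.map (homOfMono (image.ι (f ≫ s.e))).op s.z⟩

lemma map_eq_of_fac {a a' c : SimplexCategory} (f : a' ⟶ a) (s : LanSimplex Z a)
    (e : a' ⟶ c) [Epi e] (i : c ⟶ s.b) [Mono i] (fac : e ≫ i = f ≫ s.e) :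
    s.map f = ⟨c, e, Z.map (homOfMono i).op s.z⟩ := by
  obtain rfl := SimplexCategory.image_eq fac
  obtain rfl := SimplexCategory.factorThruImage_eq fac
  obtain rfl := SimplexCategory.image_ι_eq fac
  rfl

lemma map_epi {a a' : SimplexCategory} (g : a' ⟶ a) [Epi g] (s : LanSimplex Z a) :
    s.map g = ⟨s.b, g ≫ s.e, s.z⟩ := by
  rw [map_eq_of_fac g s (g ≫ s.e) (𝟙 s.b) (Category.comp_id _)]
  simp

lemma map_map {a a' a'' : SimplexCategory} (u : a'' ⟶ a') (v : a' ⟶ a) (s : LanSimplex Z a) :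
    (s.map v).map u = s.map (u ≫ v) := by
  rw [map_eq_of_fac (u ≫ v) s (factorThruImage (u ≫ factorThruImage (v ≫ s.e)))
    (image.ι (u ≫ factorThruImage (v ≫ s.e)) ≫ image.ι (v ≫ s.e)) (by simp)]
  simp only [map, homOfMono_comp, op_comp, Functor.map_comp_apply]
  rfl

lemma map_id {a : SimplexCategory} (s : LanSimplex Z a) : s.map (𝟙 a) = s := by
  rw [map_epi]
  simp

abbrev canonical {a : SimplexCategory} (z : Z.obj (op ⟨a⟩)) : LanSimplex Z a := ⟨a, 𝟙 a, z⟩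

lemma canonical_injective {a : SimplexCategory} :
    Function.Injective (canonical : Z.obj (op ⟨a⟩) → LanSimplex Z a) := by
  intro z z' h
  simpa [canonical] using h

lemma canonical_map_e {a : SimplexCategory} (s : LanSimplex Z a) :
    (canonical s.z).map s.e = s := by
  rw [canonical, map_epi]
  simp

lemma canonical_map {a a' : DeltaInj} (u : a' ⟶ a) (z : Z.obj (op a)) :
    (canonical z).map u.1 = canonical (Z.map u.op z) :=
  map_eq_of_fac u.1 (canonical z) (𝟙 a'.obj) u.1 (by simp [canonical])

lemma exists_eq_canonical_iff {a : SimplexCategory} (s : LanSimplex Z a) :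
    (∃ z, s = canonical z) ↔ Mono s.e := by
  constructor
  · rintro ⟨z, rfl⟩
    exact inferInstanceAs (Mono (𝟙 a))
  · intro
    obtain ⟨b, e, z⟩ := s
    obtain rfl : b = a := SimplexCategory.ext
      (le_antisymm (SimplexCategory.len_le_of_epi e) (SimplexCategory.len_le_of_mono e))
    obtain rfl := SimplexCategory.eq_id_of_mono e
    exact ⟨z, rfl⟩

end LanSimplex

open LanSimplex

noncomputable abbrev lanObj (Z : DeltaInjᵒᵖ ⥤ Type) : SSet where
  obj a := LanSimplex Z a.unop
  map f := ↾fun s => s.map f.unop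
  map_id a := by ext s; exact s.map_id
  map_comp f g := by ext s; exact (s.map_map g.unop f.unop).symm

noncomputable def lanMap (φ : Z ⟶ W) : lanObj Z ⟶ lanObj W where
  app a := ↾fun (s : LanSimplex Z a.unop) => ⟨s.b, s.e, φ.app _ s.z⟩
  naturality a a' f := by
    ext (s : LanSimplex Z a.unop)
    exact congrArg (LanSimplex.mk _ (factorThruImage (f.unop ≫ s.e))) (φ.naturality_apply _ s.z)

lemma lanObj_σ {n : ℕ} (i : Fin (n + 1)) (s : LanSimplex Z ⦋n⦌) :
    (lanObj Z).σ i s = ⟨s.b, SimplexCategory.σ i ≫ s.e, s.z⟩ :=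
  map_epi _ s

lemma mem_range_σ_lanObj_iff {n : ℕ} (i : Fin (n + 1)) (s : LanSimplex Z ⦋n + 1⦌) :
    s ∈ Set.range ((lanObj Z).σ i) ↔ ∃ θ : ⦋n⦌ ⟶ s.b, s.e = SimplexCategory.σ i ≫ θ := by
  constructor
  · rintro ⟨t, ht⟩
    rw [lanObj_σ] at ht
    subst ht
    exact ⟨t.e, rfl⟩
  · rintro ⟨θ, hθ⟩
    obtain ⟨b, e, z⟩ := s
    dsimp only at θ hθ
    subst hθ
    have := epi_of_epi (SimplexCategory.σ i) θ
    exact ⟨⟨b, θ, z⟩, lanObj_σ i _⟩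

lemma not_degen_lanObj_iff {n : ℕ} (s : LanSimplex Z ⦋n + 1⦌) :
    ¬ Degen (lanObj Z) s ↔ Mono s.e := by
  have hdegen : Degen (lanObj Z) s ↔ ∃ i, ∃ θ : ⦋n⦌ ⟶ s.b, s.e = SimplexCategory.σ i ≫ θ :=
    exists_congr fun i => mem_range_σ_lanObj_iff i s
  simp only [hdegen, not_exists]
  constructor
  · intro h
    rw [SimplexCategory.mono_iff_injective]
    by_contra hs
    obtain ⟨i, θ, hθ⟩ := SimplexCategory.eq_σ_comp_of_not_injective s.e hs
    exact h i θ hθ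
  · intro _ i θ hθ
    have : Mono (SimplexCategory.σ i ≫ θ) := hθ ▸ ‹Mono s.e›
    have := mono_of_mono (SimplexCategory.σ i) θ
    have := SimplexCategory.le_of_mono (SimplexCategory.σ i)
    omega

lemma complete_lanObj (Z : DeltaInjᵒᵖ ⥤ Type) : Complete (lanObj Z) := by
  intro n i s t h
  rw [lanObj_σ, lanObj_σ] at h
  obtain ⟨b, e, z⟩ := s
  obtain ⟨b', e', z'⟩ := t
  simp only [LanSimplex.mk.injEq] at h
  obtain ⟨rfl, he, hz⟩ := h
  obtain rfl := (cancel_epi _).mp (eq_of_heq he)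
  obtain rfl := eq_of_heq hz
  rfl

lemma split_lanObj (Z : DeltaInjᵒᵖ ⥤ Type) : Split (lanObj Z) := by
  refine ⟨complete_lanObj Z, fun n i s hs => ?_⟩
  rw [not_degen_lanObj_iff, ← exists_eq_canonical_iff] at hs ⊢
  obtain ⟨z, rfl⟩ := hs
  exact ⟨_, canonical_map (homOfMono (SimplexCategory.δ i)) z⟩

lemma conservative_lanMap (φ : Z ⟶ W) : Conservative (lanMap φ) :=
  conservative_of_mem_range_σ (complete_lanObj Z) (complete_lanObj W) fun _ i y hy =>
    (mem_range_σ_lanObj_iff i y).mpr ((mem_range_σ_lanObj_iff i ((lanMap φ).app _ y)).mp hy)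

noncomputable def lanFunctor : (DeltaInjᵒᵖ ⥤ Type) ⥤ SplitSSet where
  obj Z := ⟨lanObj Z, split_lanObj Z⟩
  map φ := ⟨lanMap φ, conservative_lanMap φ⟩

def restriction : SSet ⥤ (DeltaInjᵒᵖ ⥤ Type) :=
  (Functor.whiskeringLeft DeltaInjᵒᵖ SimplexCategoryᵒᵖ Type).obj DeltaInj.incl.op

noncomputable def lanAdjunction : lanFunctor ⋙ SplitSSet.forget ⊣ restriction :=
  Adjunction.mkOfUnitCounit
    { unit :=
        { app Z :=
            { app a := ↾canonical
              naturality a a' u := by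
                ext z
                exact (canonical_map u.unop z).symm } }
      counit :=
        { app X :=
            { app c := ↾fun (s : LanSimplex (DeltaInj.incl.op ⋙ X) c.unop) => X.map s.e.op s.z
              naturality c c' f := by
                ext ⟨b, e, (z : X.obj (op b))⟩
                change X.map (factorThruImage (f.unop ≫ e)).op
                  (X.map (image.ι (f.unop ≫ e)).op z) = X.map f (X.map e.op z)
                rw [← Functor.map_comp_apply, ← Functor.map_comp_apply, ← op_comp, image.fac]
                rfl }
          naturality X X' g := by
            ext c (s : LanSimplex (DeltaInj.incl.op ⋙ X) c.unop)
            exact (NatTrans.naturality_apply g s.e.op s.z).symm }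
      left_triangle := by
        ext Z c (s : LanSimplex Z c.unop)
        exact canonical_map_e s
      right_triangle := by
        ext X a x
        exact Functor.map_id_apply X _ x }

lemma lanObj_hom_ext {X : SSet} {f g : lanObj Z ⟶ X}
    (h : ∀ (a : SimplexCategory) (z : Z.obj (op ⟨a⟩)),
      f.app (op a) (canonical z) = g.app (op a) (canonical z)) : f = g := by
  ext c (s : LanSimplex Z c.unop)
  rw [← canonical_map_e s]
  exact (NatTrans.naturality_apply f s.e.op _).trans
    ((congrArg (X.map s.e.op) (h _ s.z)).trans (NatTrans.naturality_apply g s.e.op _).symm)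

instance : lanFunctor.Faithful where
  map_injective {Z W} {φ ψ} h := by
    ext a z
    apply canonical_injective
    exact congrArg
      (fun f : lanFunctor.obj Z ⟶ lanFunctor.obj W => f.1.app (op a.unop.obj) (canonical z)) h

lemma exists_app_canonical_of_conservative {f : lanObj Z ⟶ lanObj W} (hf : Conservative f)
    {a : SimplexCategory} (z : Z.obj (op ⟨a⟩)) :
    ∃ w, f.app (op a) (canonical z) = canonical w := by
  rw [exists_eq_canonical_iff]
  obtain ⟨_ | n⟩ := a
  · rw [SimplexCategory.mono_iff_injective]
    exact fun x y _ => Subsingleton.elim (α := Fin 1) x y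
  · rw [← not_degen_lanObj_iff]
    exact Conservative.not_degen hf ((not_degen_lanObj_iff _).mpr (inferInstanceAs (Mono (𝟙 _))))

noncomputable def preimageOfConservative (f : lanObj Z ⟶ lanObj W) (hf : Conservative f) :
    Z ⟶ W where
  app a := ↾fun z => (exists_app_canonical_of_conservative hf z).choose
  naturality a a' u := by
    ext z
    apply canonical_injective
    change canonical (exists_app_canonical_of_conservative hf (Z.map u z)).choose =
      canonical (W.map u (exists_app_canonical_of_conservative hf z).choose)
    rw [← (exists_app_canonical_of_conservative hf _).choose_spec, ← u.op_unop, ← canonical_map,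
      ← canonical_map, ← (exists_app_canonical_of_conservative hf z).choose_spec]
    exact NatTrans.naturality_apply f u.unop.1.op (canonical z)

instance : lanFunctor.Full where
  map_surjective f := ⟨preimageOfConservative f.1 f.2, Subtype.ext (lanObj_hom_ext
    fun _ z => (exists_app_canonical_of_conservative f.2 z).choose_spec.symm)⟩

section EilenbergZilber

variable {X : SSet}

noncomputable def fromLanNonDegenerate (hX : Split X) :
    lanObj (Split.nonDegenerate hX).toFunctor ⟶ X :=
  lanMap (Split.nonDegenerate hX).ι ≫ lanAdjunction.counit.app X

lemma bijective_fromLanNonDegenerate_app (hX : Split X) (c : SimplexCategoryᵒᵖ) :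
    Function.Bijective ((fromLanNonDegenerate hX).app c) := by
  obtain ⟨⟨n⟩⟩ := c
  constructor
  · rintro ⟨⟨m⟩, e, ⟨y, hy⟩⟩ ⟨⟨m'⟩, e', ⟨y', hy'⟩⟩ (h : X.map e.op y = X.map e'.op y')
    obtain rfl := X.unique_nonDegenerate_dim _ e ⟨y, hy⟩ rfl e' ⟨y', hy'⟩ h
    obtain rfl := X.unique_nonDegenerate_map _ e ⟨y, hy⟩ rfl e' ⟨y', hy'⟩ h
    cases X.unique_nonDegenerate_simplex _ e ⟨y, hy⟩ rfl e ⟨y', hy'⟩ h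
    rfl
  · intro x
    obtain ⟨m, e, _, y, rfl⟩ := X.exists_nonDegenerate x
    exact ⟨⟨⦋m⦌, e, y⟩, rfl⟩

lemma isIso_fromLanNonDegenerate (hX : Split X) : IsIso (fromLanNonDegenerate hX) :=
  have (c : SimplexCategoryᵒᵖ) : IsIso ((fromLanNonDegenerate hX).app c) :=
    (isIso_iff_bijective _).mpr (bijective_fromLanNonDegenerate_app hX c)
  NatIso.isIso_of_isIso_app _

instance : lanFunctor.EssSurj where
  mem_essImage A := ⟨_, ⟨SplitSSet.isoOfIsIso (A := lanFunctor.obj _)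
    (fromLanNonDegenerate A.split) (isIso_fromLanNonDegenerate A.split)⟩⟩

end EilenbergZilber

end SemiSimplicial

theorem statement14 :
    ∃ F : (DeltaInjᵒᵖ ⥤ Type) ⥤ SplitSSet,
      Nonempty (F ⋙ SplitSSet.forget ≅ DeltaInj.incl.op.lan) ∧ F.IsEquivalence :=
  ⟨SemiSimplicial.lanFunctor,
    ⟨SemiSimplicial.lanAdjunction.leftAdjointUniq (DeltaInj.incl.op.lanAdjunction Type)⟩, { }⟩
end
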